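/- Let P = {p₁ < ⋯ < pₙ} and Q = {q₁ < ⋯ < qₙ} be two n-element sets of reals with P ≠ Q, and suppose the claim of the selection lemma holds for all smaller n. Then one can transform P into Q in at most n steps, where each step replaces a single element pᵢ by qᵢ (with pᵢ ≠ qᵢ) in such a way that the relative order of the current n elements is preserved throughout (i.e., replacing pᵢ by qᵢ does not change the rank of any element). -/

import Mathlib

/-! As long as the current tuple `f` differs from `q`, some coordinate can be moved to its target
without breaking strict monotonicity: if some `f i < q i`, the largest such `i` works, and
otherwise the smallest `i` with `q i < f i` does. Each move fixes one of the at most `n`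
coordinates where `f` differs from `q`, and a coordinate that is not yet fixed still carries its
value from `p`. -/

open Function

theorem Set.ncard_setOf_update_ne {ι α : Type*} [Finite ι] [DecidableEq ι] (f q : ι → α) {i : ι}
    (hi : f i ≠ q i) :
    {j | update f i (q i) j ≠ q j}.ncard = {j | f j ≠ q j}.ncard - 1 := by
  have : {j | update f i (q i) j ≠ q j} = {j | f j ≠ q j} \ {i} := by
    ext j
    rcases eq_or_ne j i with rfl | hj <;> simp [*]
  rw [this, Set.ncard_sdiff_singleton_of_mem hi]

section

variable {ι α : Type*} [LinearOrder ι] [LinearOrder α]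

theorem StrictMono.update_of_between {f : ι → α} (hf : StrictMono f) {i : ι} {x : α}
    (hlt : ∀ a < i, f a < x) (hgt : ∀ b, i < b → x < f b) : StrictMono (update f i x) := by
  intro a b hab
  rcases eq_or_ne a i with rfl | ha
  · simpa [update_of_ne hab.ne'] using hgt b hab
  rcases eq_or_ne b i with rfl | hb
  · simpa [update_of_ne ha] using hlt a hab
  simpa [update_of_ne ha, update_of_ne hb] using hf hab

theorem StrictMono.exists_ne_strictMono_update [Finite ι] {f q : ι → α} (hf : StrictMono f)
    (hq : StrictMono q) (hne : f ≠ q) : ∃ i, f i ≠ q i ∧ StrictMono (update f i (q i)) := by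
  by_cases hbelow : ∃ i, f i < q i
  · obtain ⟨i, hi, hmax⟩ := Set.exists_max_image {i | f i < q i} id (Set.toFinite _) hbelow
    refine ⟨i, hi.ne, hf.update_of_between (fun a ha => (hf ha).trans hi) fun b hb => ?_⟩
    have hqb : q b ≤ f b := not_lt.1 fun h => (hmax b h).not_gt hb
    exact (hq hb).trans_le hqb
  · simp only [not_exists, not_lt] at hbelow
    have habove : ∃ i, q i < f i := by
      obtain ⟨i, hi⟩ := Function.ne_iff.1 hne
      exact ⟨i, (hbelow i).lt_of_ne' hi⟩
    obtain ⟨i, hi, hmin⟩ := Set.exists_min_image {i | q i < f i} id (Set.toFinite _) habove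
    refine ⟨i, hi.ne', hf.update_of_between (fun a ha => ?_) fun b hb => hi.trans (hf hb)⟩
    have hfa : f a ≤ q a := not_lt.1 fun h => (hmin a h).not_gt ha
    exact hfa.trans_lt (hq ha)

theorem exists_strictMono_chain_update [Finite ι] {p q : ι → α} (hq : StrictMono q) {f : ι → α}
    (hf : StrictMono f) (hfpq : ∀ i, f i = p i ∨ f i = q i) :
    ∃ (k : ℕ) (g : Fin (k + 1) → ι → α), k = {i | f i ≠ q i}.ncard ∧
      g 0 = f ∧ g (Fin.last k) = q ∧ (∀ j, StrictMono (g j)) ∧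
      ∀ j : Fin k, ∃ i, p i ≠ q i ∧ g j.succ i = q i ∧
        ∀ i' ≠ i, g j.succ i' = g j.castSucc i' := by
  induction hk : {i | f i ≠ q i}.ncard generalizing f with
  | zero =>
    have hfq : f = q := funext fun i => by_contra fun hi =>
      Set.eq_empty_iff_forall_notMem.1 ((Set.ncard_eq_zero).1 hk) i hi
    exact ⟨0, fun _ => f, rfl, rfl, hfq, fun _ => hf, Fin.elim0⟩
  | succ k ih =>
    have hne : f ≠ q := by rintro rfl; simp at hk
    obtain ⟨i, hi, hmono⟩ := hf.exists_ne_strictMono_update hq hne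
    have hpq : p i ≠ q i := (hfpq i).resolve_right hi ▸ hi
    have hfpq' : ∀ j, update f i (q i) j = p j ∨ update f i (q i) j = q j := by
      intro j
      rcases eq_or_ne j i with rfl | hj <;> simp [update_of_ne, *]
    obtain ⟨_, g, rfl, hg0, hgl, hgm, hgs⟩ :=
      ih hmono hfpq' (by rw [Set.ncard_setOf_update_ne f q hi, hk, Nat.add_sub_cancel])
    refine ⟨_, Fin.cons f g, rfl, rfl, by simpa [← Fin.succ_last] using hgl, ?_, ?_⟩
    · intro j
      cases j using Fin.cases <;> simp [hf, hgm]
    · intro j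
      cases j using Fin.cases with
      | zero => exact ⟨i, hpq, by simp [hg0], fun i' hi' => by simp [hg0, update_of_ne hi']⟩
      | succ j => simpa [← Fin.succ_castSucc] using hgs j

end

theorem stmt_4_general (n : ℕ) (p q : Fin n → ℝ)
    (hp : StrictMono p) (hq : StrictMono q) :
    ∃ (k : ℕ) (g : Fin (k + 1) → Fin n → ℝ), k ≤ n ∧
      g 0 = p ∧ g (Fin.last k) = q ∧
      (∀ j : Fin (k + 1), StrictMono (g j)) ∧
      ∀ j : Fin k, ∃ i : Fin n,
        p i ≠ q i ∧
        g j.succ i = q i ∧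
        (∀ i' : Fin n, i' ≠ i → g j.succ i' = g j.castSucc i') := by
  obtain ⟨k, g, hk, hg⟩ := exists_strictMono_chain_update hq hp fun i => Or.inl rfl
  refine ⟨k, g, ?_, hg⟩
  simpa [hk] using Set.ncard_le_card {i | p i ≠ q i}

theorem stmt_4 (n : ℕ) (p q : Fin n → ℝ)
    (hp : StrictMono p) (hq : StrictMono q) (hne : p ≠ q)
    (hIH : ∀ m : ℕ, m < n → ∀ p' q' : Fin m → ℝ, StrictMono p' → StrictMono q' →
      p' ≠ q' → ∃ i : Fin m, p' i ≠ q' i ∧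
        ∀ j : Fin m, ¬ (min (p' i) (q' i) < p' j ∧ p' j < max (p' i) (q' i))) :
    ∃ (k : ℕ) (g : Fin (k + 1) → Fin n → ℝ), k ≤ n ∧
      g 0 = p ∧ g (Fin.last k) = q ∧
      (∀ j : Fin (k + 1), StrictMono (g j)) ∧
      ∀ j : Fin k, ∃ i : Fin n,
        p i ≠ q i ∧
        g j.succ i = q i ∧
        (∀ i' : Fin n, i' ≠ i → g j.succ i' = g j.castSucc i') :=
  stmt_4_general n p q hp hq
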